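/- Let V be a finite-dimensional vector space over a field k of characteristic zero with dim V ≥ 1. The space of GL(V)-invariant symmetric bilinear forms on V ⊕ V* is one-dimensional, spanned by the form B((x,y),(x',y')) = ⟨y',x⟩ + ⟨y,x'⟩. -/

import Mathlib

/-!
Scaling by `t` acts on `V ⊕ V*` by `(t, t⁻¹)`, so an invariant form vanishes on `V × V` and on
`V* × V*` as soon as `t² ≠ 1`. By symmetry it is then determined by the block
`(x, y) ↦ f (x, 0) (0, y)`, which is `y (S x)` for an endomorphism `S` of `V` commuting with
`GL(V)`. Commuting with the transvection `v ↦ v + ψ v • x`, `ψ x = 0`, forces `ψ (S x) = 0`, so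
`S x` is a multiple of `x` for every `x`, and `S` is a scalar.
-/

open Module

/-- The action of `GL(V)` on `V ⊕ V*`: `g • (x, y) = (g x, (g*)⁻¹ y)`, where
`(g*)⁻¹ y = y ∘ g⁻¹`. -/
noncomputable def glAct {k V : Type*} [Field k] [AddCommGroup V] [Module k V]
    (g : V ≃ₗ[k] V) (w : V × Module.Dual k V) : V × Module.Dual k V :=
  (g w.1, w.2 ∘ₗ (g.symm : V →ₗ[k] V))

section

variable {k V : Type*} [Field k] [AddCommGroup V] [Module k V]

theorem LinearMap.exists_eq_smul_id_of_forall_commute {S : V →ₗ[k] V}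
    (hS : ∀ (g : V ≃ₗ[k] V) (v : V), S (g v) = g (S v)) : ∃ c : k, S = c • 1 := by
  refine exists_eq_smul_id_of_forall_notLinearIndependent fun v hli => ?_
  have hv : v ≠ 0 := by simpa using hli.ne_zero 0
  have hSv : S v ∉ Submodule.span k {v} := by
    rw [Submodule.mem_span_singleton]
    rintro ⟨a, ha⟩
    exact (LinearIndependent.pair_iff' hv).mp hli a ha
  obtain ⟨ψ, hψSv, hψ⟩ := Submodule.exists_dual_map_eq_bot_of_notMem hSv inferInstance
  have hψv : ψ v = 0 := by
    simpa [Submodule.map_span, Submodule.span_singleton_eq_bot] using hψ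
  have hcomm := hS (LinearEquiv.transvection hψv) v
  simp only [LinearEquiv.transvection.apply, hψv, zero_smul, add_zero, left_eq_add] at hcomm
  exact hv ((smul_eq_zero.mp hcomm).resolve_left hψSv)

theorem Module.Dual.exists_eq_smul_eval_of_forall_comp [IsReflexive k V]
    (b : V →ₗ[k] Dual k V →ₗ[k] k)
    (hb : ∀ (g : V ≃ₗ[k] V) (x : V) (y : Dual k V), b (g x) y = b x (y ∘ₗ g)) :
    ∃ c : k, b = c • Dual.eval k V := by
  set S : V →ₗ[k] V := (evalEquiv k V).symm.toLinearMap ∘ₗ b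
  have hbS : ∀ x y, b x y = y (S x) := fun x y => by simp [S]
  obtain ⟨c, hc⟩ := LinearMap.exists_eq_smul_id_of_forall_commute (S := S) fun g x => by
    rw [← sub_eq_zero, ← forall_dual_apply_eq_zero_iff k]
    intro y
    rw [map_sub, sub_eq_zero, ← hbS, hb, hbS]
    rfl
  refine ⟨c, LinearMap.ext₂ fun x y => ?_⟩
  simp [hbS, hc]

def IsGLInvariant (f : (V × Dual k V) →ₗ[k] (V × Dual k V) →ₗ[k] k) : Prop :=
  ∀ (g : V ≃ₗ[k] V) (w w' : V × Dual k V), f (glAct g w) (glAct g w') = f w w'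

theorem glAct_smulOfNeZero (t : k) (ht : t ≠ 0) (w : V × Dual k V) :
    glAct (LinearEquiv.smulOfNeZero k V t ht) w = (t • w.1, t⁻¹ • w.2) := by
  have hsymm : ∀ v : V, (LinearEquiv.smulOfNeZero k V t ht).symm v = t⁻¹ • v := fun v =>
    (LinearEquiv.symm_apply_eq _).mpr (by simp [smul_smul, inv_mul_cancel₀ ht])
  ext v <;> simp [glAct, hsymm]

theorem LinearMap.eq_zero_of_apply_smul_smul_eq {M : Type*} [AddCommGroup M] [Module k M]
    (f : M →ₗ[k] M →ₗ[k] k) {t : k} (ht : t * t ≠ 1) {u u' : M}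
    (h : f (t • u) (t • u') = f u u') : f u u' = 0 := by
  simp only [map_smul, LinearMap.smul_apply, smul_eq_mul] at h
  have : (t * t - 1) * f u u' = 0 := by linear_combination h
  exact (mul_eq_zero.mp this).resolve_left (sub_ne_zero.mpr ht)

namespace IsGLInvariant

variable {f : (V × Dual k V) →ₗ[k] (V × Dual k V) →ₗ[k] k}

theorem apply_inl_inl_eq_zero [CharZero k] (hf : IsGLInvariant f) (x x' : V) :
    f (x, 0) (x', 0) = 0 := by
  refine f.eq_zero_of_apply_smul_smul_eq (t := 2) (by norm_num) ?_
  simpa [glAct_smulOfNeZero] using hf (LinearEquiv.smulOfNeZero k V 2 two_ne_zero) (x, 0) (x', 0)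

theorem apply_inr_inr_eq_zero [CharZero k] (hf : IsGLInvariant f) (y y' : Dual k V) :
    f (0, y) (0, y') = 0 := by
  refine f.eq_zero_of_apply_smul_smul_eq (t := 2⁻¹) (by norm_num) ?_
  simpa [glAct_smulOfNeZero] using hf (LinearEquiv.smulOfNeZero k V 2 two_ne_zero) (0, y) (0, y')

theorem exists_apply_inl_inr_eq_mul [IsReflexive k V] (hf : IsGLInvariant f) :
    ∃ c : k, ∀ x y, f (x, 0) (0, y) = c * y x := by
  obtain ⟨c, hc⟩ := Dual.exists_eq_smul_eval_of_forall_comp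
    (f.compl₁₂ (LinearMap.inl k V (Dual k V)) (LinearMap.inr k V (Dual k V))) fun g x y => by
      simpa [glAct, LinearMap.comp_assoc] using hf g (x, 0) (0, y ∘ₗ g)
  exact ⟨c, fun x y => by simpa using LinearMap.congr_fun₂ hc x y⟩

end IsGLInvariant

end

/-- For `dim V ≥ 1`, the space of `GL(V)`-invariant symmetric bilinear
forms on `V ⊕ V*` is one-dimensional, spanned by
`B((x,y),(x',y')) = ⟨y',x⟩ + ⟨y,x'⟩`: `B` is a nonzero invariant symmetric bilinear
form, and every invariant symmetric bilinear form is a scalar multiple of `B`. -/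
theorem invariant_symmetric_forms_one_dimensional
    (k V : Type*) [Field k] [CharZero k] [AddCommGroup V] [Module k V]
    [FiniteDimensional k V] (hV : 1 ≤ Module.finrank k V)
    (B : (V × Module.Dual k V) →ₗ[k] (V × Module.Dual k V) →ₗ[k] k)
    (hB : ∀ w w' : V × Module.Dual k V, B w w' = w'.2 w.1 + w.2 w'.1) :
    (B ≠ 0) ∧
    (∀ w w', B w w' = B w' w) ∧
    (∀ (g : V ≃ₗ[k] V) (w w'), B (glAct g w) (glAct g w') = B w w') ∧
    (∀ f : (V × Module.Dual k V) →ₗ[k] (V × Module.Dual k V) →ₗ[k] k,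
      (∀ w w', f w w' = f w' w) →
      (∀ (g : V ≃ₗ[k] V) (w w'), f (glAct g w) (glAct g w') = f w w') →
      ∃ c : k, f = c • B) := by
  have : Nontrivial V := finrank_pos_iff.mp hV
  obtain ⟨x₀, hx₀⟩ := exists_ne (0 : V)
  obtain ⟨y₀, hy₀⟩ : ∃ y : Dual k V, y x₀ ≠ 0 := by
    simpa using (forall_dual_apply_eq_zero_iff k x₀).not.mpr hx₀
  refine ⟨fun hB0 => hy₀ ?_, fun w w' => by rw [hB, hB, add_comm],
    fun g w w' => by simp [glAct, hB], fun f hsymm (hf : IsGLInvariant f) => ?_⟩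
  · simpa [hB0] using (hB (x₀, 0) (0, y₀)).symm
  obtain ⟨c, hc⟩ := IsGLInvariant.exists_apply_inl_inr_eq_mul hf
  refine ⟨c, LinearMap.ext₂ fun ⟨x, y⟩ ⟨x', y'⟩ => ?_⟩
  have hsplit : ∀ (x : V) (y : Dual k V), (x, y) = (x, 0) + (0, y) := fun x y => by simp
  rw [hsplit x y, hsplit x' y']
  simp only [map_add, LinearMap.add_apply]
  rw [hf.apply_inl_inl_eq_zero, hf.apply_inr_inr_eq_zero, hc, hsymm (0, y), hc]
  simp [hB]
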